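/- arXiv:0802.2854 — 5 statements merged into one kernel-verified Lean document; each statement's English description precedes it below -/
import Mathlib

section
/- Let (T,B) be a tree decomposition of a graph G = (V,E). For every simple path π = (v_0, ..., v_m) in G, choosing for each i a node x_i of T whose bag contains both v_{i-1} and v_i, the induced walk in T visits no node of T more than k+1 times, where k is the width of the decomposition. That is, for each node x of T, the number of indices i with x_i = x is at most k+1. -/
open scoped Classical

theorem tree_decomposition_walk_visits_general {V X : Type} (B : X → Finset V) (k : ℕ)
    (hwidth : ∀ x : X, (B x).card ≤ k + 1)
    (m : ℕ) (vtx : Fin (m + 1) → V) (hinj : Function.Injective vtx)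
    (nd : Fin m → X)
    (hnd : ∀ i : Fin m, vtx i.castSucc ∈ B (nd i) ∧ vtx i.succ ∈ B (nd i)) :
    ∀ y : X, (Finset.univ.filter fun i : Fin m => nd i = y).card ≤ k + 1 := by
  intro y
  -- Visit `i` puts `v_{i-1}` into `B y`, and distinct visits give distinct vertices of the path.
  refine (Finset.card_le_card_of_injOn (fun i => vtx i.castSucc) ?_ ?_).trans (hwidth y)
  · intro i hi
    rw [Finset.mem_coe, Finset.mem_filter] at hi
    exact hi.2 ▸ (hnd i).1
  · exact (hinj.comp (Fin.castSucc_injective m)).injOn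

/-- Let `(T,B)` be a tree decomposition of width at most `k` of a graph `G`.  For any
simple path `v_0, …, v_m` in `G` and any choice of nodes `x_1, …, x_m` of `T` with
`v_{i-1}, v_i ∈ B(x_i)`, the induced walk visits no node of `T` more than `k+1`
times. -/
theorem tree_decomposition_walk_visits {V X : Type} (G : SimpleGraph V)
    (T : SimpleGraph X) (hT : T.IsTree) (B : X → Finset V) (k : ℕ)
    (hcov : ∀ v : V, ∃ x : X, v ∈ B x)
    (hedge : ∀ u v : V, G.Adj u v → ∃ x : X, u ∈ B x ∧ v ∈ B x)
    (hsub : ∀ (v : V) (x y z : X) (p : T.Walk x z), p.IsPath → y ∈ p.support →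
      v ∈ B x → v ∈ B z → v ∈ B y)
    (hwidth : ∀ x : X, (B x).card ≤ k + 1)
    (m : ℕ) (vtx : Fin (m + 1) → V) (hinj : Function.Injective vtx)
    (hadj : ∀ i : Fin m, G.Adj (vtx i.castSucc) (vtx i.succ))
    (nd : Fin m → X)
    (hnd : ∀ i : Fin m, vtx i.castSucc ∈ B (nd i) ∧ vtx i.succ ∈ B (nd i)) :
    ∀ y : X, (Finset.univ.filter fun i : Fin m => nd i = y).card ≤ k + 1 :=
  tree_decomposition_walk_visits_general B k hwidth m vtx hinj nd hnd
end

section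
/- Let G be a vertex-weighted undirected graph having a tree decomposition of width k ≥ 2 and elongation s ≥ 2, and let t ≥ 2 be an integer. Set a = k+1 and g = ((k+1)·(a^{(s+1)t-2}(a+1) - 2))/(a-1). Then G has a (t,g)-trimming: a set U of vertices of weight at most W/t (W the total weight of G) such that every simple path in G with more than g edges contains a vertex of U. -/
/-!
Root the decomposition tree at `r` and let `q = (s + 1) t`. For `i < t` let `Uᵢ` be the set of
vertices lying in some bag at depth `≡ i (s + 1) (mod q)`. Bags sharing a vertex have depths within
`s` of each other, so the `Uᵢ` are disjoint and one of them weighs at most `W / t`.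

The bags meeting a path form a subtree. If the path avoids `Uᵢ`, that subtree misses a residue
modulo `q`, so its depths span at most `q - 2` levels. Deleting the path vertices that lie in the
bag of the subtree's top node splits the path into at most `a + 1` runs. Each run meets only deeper
bags and has a path neighbour in that top bag, and this neighbour also lies in the top bag of the
run. The run's top bag therefore holds a vertex off the run, which leaves room for at most `a - 1`
run vertices there, so every run has at most `a` subruns. Induction on the number of levels then
bounds the number of vertices of the path by `(a + 1) a^(q - 2) - 1`.
-/

open scoped Classical

/-- A tree decomposition of a graph `G`. -/
structure TreeDecomp (V : Type) (G : SimpleGraph V) where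
  X : Type
  T : SimpleGraph X
  tree : T.IsTree
  B : X → Finset V
  cover : ∀ v : V, ∃ x : X, v ∈ B x
  edges : ∀ u v : V, G.Adj u v → ∃ x : X, u ∈ B x ∧ v ∈ B x
  subtree : ∀ (v : V) (x y z : X) (p : T.Walk x z), p.IsPath → y ∈ p.support →
    v ∈ B x → v ∈ B z → v ∈ B y

/-- A `(t,g)`-trimming of a vertex-weighted graph. -/
def IsTrimming {V : Type} [Fintype V] (G : SimpleGraph V) (w : V → ℝ)
    (t g : ℝ) (U : Finset V) : Prop :=
  (∑ v ∈ U, w v) ≤ (∑ v, w v) / t ∧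
    ∀ (u v : V) (p : G.Walk u v), p.IsPath → (p.length : ℝ) > g →
      ∃ x ∈ p.support, x ∈ U

lemma Nat.exists_between_mod_eq (a : ℕ) {q c : ℕ} (hc : c < q) :
    ∃ n, a ≤ n ∧ n < a + q ∧ n % q = c := by
  have hlt := Nat.mod_lt (c + q - a % q) (by omega : 0 < q)
  refine ⟨a + (c + q - a % q) % q, le_self_add, by omega, ?_⟩
  have hdecomp : a + (c + q - a % q) = c + q * (a / q + 1) := by
    have := Nat.mod_add_div a q
    have := Nat.mod_lt a (by omega : 0 < q)
    rw [Nat.mul_add]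
    omega
  rw [Nat.add_mod_mod, hdecomp, Nat.add_mul_mod_self_left, Nat.mod_eq_of_lt hc]

theorem List.length_add_one_le_of_runs {α : Type*} (p : α → Bool) {N : ℕ} (hN : 1 ≤ N)
    (P : List α)
    (hruns : ∀ A Q B, P = A ++ Q ++ B → Q ≠ [] → (∀ x ∈ Q, p x = false) →
      (∀ x ∈ A.getLast?, p x) → (∀ x ∈ B.head?, p x) → Q.length + 1 ≤ N) :
    P.length + 1 ≤ ((P.filter p).length + 1) * N := by
  set Q := P.takeWhile (fun x => !p x)
  have hP : P = Q ++ P.dropWhile (fun x => !p x) := List.takeWhile_append_dropWhile.symm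
  have hQ : ∀ x ∈ Q, p x = false := fun x hx => by simpa using List.mem_takeWhile_imp hx
  have hhead : ∀ x ∈ (P.dropWhile (fun x => !p x)).head?, p x := fun x hx => by
    have := List.head?_dropWhile_not (fun x => !p x) P
    rw [Option.mem_def.1 hx] at this
    simpa using this
  have hQN : Q.length + 1 ≤ N := by
    by_cases hQnil : Q = []
    · simpa [hQnil] using hN
    · exact hruns [] Q _ hP hQnil hQ (by simp) hhead
  have hfilterQ : Q.filter p = [] := List.filter_eq_nil_iff.2 (by simpa using hQ)
  rcases hrest : P.dropWhile (fun x => !p x) with _ | ⟨s, P'⟩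
  · rw [hrest, List.append_nil] at hP
    rw [hP, hfilterQ]
    simpa using hQN
  · rw [hrest] at hP hhead
    have hs : p s := hhead s rfl
    have hP' := List.length_add_one_le_of_runs p hN P' fun A' Q' B' h hQ' hQ'p hA' hB' =>
      hruns (Q ++ s :: A') Q' B' (by simp [hP, h]) hQ' hQ'p
        (by cases hA : A'.getLast? <;> simp_all [List.getLast?_cons]) hB'
    rw [hP, List.filter_append, hfilterQ, List.filter_cons_of_pos hs]
    simp only [List.length_append, List.length_cons, List.nil_append]
    nlinarith
termination_by P.length
decreasing_by
  have := congrArg List.length hrest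
  have := List.length_dropWhile_le (fun x => !p x) P
  simp only [List.length_cons] at *
  omega

lemma List.Nodup.length_le_card_of_forall_mem {α : Type*} {L : List α} {s : Finset α}
    (hL : L.Nodup) (h : ∀ v ∈ L, v ∈ s) : L.length ≤ s.card := by
  rw [← List.toFinset_card_of_nodup hL]
  exact Finset.card_le_card fun v hv => h v (List.mem_toFinset.1 hv)

lemma List.exists_rel_of_isChain_append {α : Type*} {R : α → α → Prop} {A Q B : List α}
    (h : (A ++ Q ++ B).IsChain R) (hQ : Q ≠ []) (hAB : A ≠ [] ∨ B ≠ []) :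
    ∃ s, (s ∈ A.getLast? ∨ s ∈ B.head?) ∧ ∃ q ∈ Q, R s q ∨ R q s := by
  obtain ⟨hAQ, -, hQB⟩ := List.isChain_append.1 h
  obtain ⟨-, -, hAQ⟩ := List.isChain_append.1 hAQ
  rcases hAB with hA | hB
  · refine ⟨_, .inl (List.getLast?_eq_some_getLast hA), _, List.head_mem hQ, .inl ?_⟩
    exact hAQ _ (List.getLast?_eq_some_getLast hA) _ (List.head?_eq_some_head hQ)
  · refine ⟨_, .inr (List.head?_eq_some_head hB), _, List.getLast_mem hQ, .inr ?_⟩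
    refine hQB _ ?_ _ (List.head?_eq_some_head hB)
    rw [List.getLast?_append_of_ne_nil _ hQ, List.getLast?_eq_some_getLast hQ]
    rfl

lemma Finset.exists_sum_le_div_of_pairwiseDisjoint {ι V : Type*} [Fintype V] {w : V → ℝ}
    (hw : ∀ v, 0 ≤ w v) {s : Finset ι} (hs : s.Nonempty) {U : ι → Finset V}
    (hU : (s : Set ι).PairwiseDisjoint U) : ∃ i ∈ s, ∑ v ∈ U i, w v ≤ (∑ v, w v) / s.card := by
  apply Finset.exists_le_of_sum_le hs
  rw [Finset.sum_const, nsmul_eq_mul, mul_div_cancel₀ _ (by simp [hs.ne_empty]),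
    ← Finset.sum_biUnion hU]
  exact Finset.sum_le_sum_of_subset_of_nonneg (Finset.subset_univ _) fun v _ _ => hw v

namespace SimpleGraph

variable {X : Type*} {T : SimpleGraph X} {r x y z u : X}

/-- `x` lies on a shortest path from `r` to `z`; in a tree rooted at `r` this says that `x` is an
ancestor of `z`. -/
def IsAncestor (T : SimpleGraph X) (r x z : X) : Prop :=
  T.dist r x + T.dist x z = T.dist r z

lemma IsAncestor.refl (T : SimpleGraph X) (r x : X) : T.IsAncestor r x x := by
  simp [IsAncestor]

lemma IsAncestor.eq_of_dist_le (hT : T.Connected) (h : T.IsAncestor r x z)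
    (hle : T.dist r z ≤ T.dist r x) : x = z :=
  (hT.dist_eq_zero_iff).1 (by unfold IsAncestor at h; omega)

lemma IsAncestor.dist_lt (hT : T.Connected) (h : T.IsAncestor r x z) (hne : x ≠ z) :
    T.dist r x < T.dist r z :=
  lt_of_not_ge fun hle => hne (h.eq_of_dist_le hT hle)

lemma IsAncestor.trans (hT : T.Connected) (hxy : T.IsAncestor r x y)
    (hyz : T.IsAncestor r y z) : T.IsAncestor r x z := by
  have := hT.dist_triangle (u := x) (v := y) (w := z)
  have := hT.dist_triangle (u := r) (v := x) (w := z)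
  unfold IsAncestor at *
  omega

lemma IsAncestor.exists_isPath_mem_support (hT : T.Connected) (hxy : T.IsAncestor r x y)
    (hyz : T.IsAncestor r y z) : ∃ p : T.Walk x z, p.IsPath ∧ y ∈ p.support := by
  obtain ⟨p, -, hp⟩ := hT.exists_path_of_dist x y
  obtain ⟨q, -, hq⟩ := hT.exists_path_of_dist y z
  have hxz := hxy.trans hT hyz
  refine ⟨p.append q, (p.append q).isPath_of_length_eq_dist ?_, by simp⟩
  unfold IsAncestor at *
  rw [Walk.length_append]
  omega

lemma IsTree.eq_of_adj_of_dist_add_one (hT : T.IsTree) {y y' : X} (hy : T.Adj y u)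
    (hy' : T.Adj y' u) (h : T.dist r y + 1 = T.dist r u) (h' : T.dist r y' + 1 = T.dist r u) :
    y = y' := by
  obtain ⟨p, -, hp⟩ := hT.connected.exists_path_of_dist r y
  obtain ⟨p', -, hp'⟩ := hT.connected.exists_path_of_dist r y'
  have hpath : (p.concat hy).IsPath := (p.concat hy).isPath_of_length_eq_dist (by simp [hp, h])
  have hpath' : (p'.concat hy').IsPath :=
    (p'.concat hy').isPath_of_length_eq_dist (by simp [hp', h'])
  have := congrArg Subtype.val <|
    (hT.isAcyclic.subsingleton_path r u).elim ⟨_, hpath⟩ ⟨_, hpath'⟩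
  exact (Walk.concat_inj this).1

lemma IsAncestor.of_adj (hT : T.IsTree) (hxu : T.IsAncestor r x u) (hadj : T.Adj u y)
    (hle : T.dist r x ≤ T.dist r y) : T.IsAncestor r x y := by
  have hconn := hT.connected
  have htri := hconn.dist_triangle (u := r) (v := x) (w := y)
  unfold IsAncestor at *
  rcases hT.dist_eq_dist_add_one_of_adj r hadj with hup | hdown
  · -- `y` is the parent of `u`: it is the penultimate vertex of the geodesic from `x` to `u`
    obtain ⟨q, -, hq⟩ := hconn.exists_path_of_dist x u
    have hq0 : ¬ q.Nil := fun hnil => by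
      have := hnil.eq; subst this; omega
    have hlen := Walk.length_dropLast_add_one hq0
    have hd := SimpleGraph.dist_le q.dropLast
    have hd' := hconn.dist_triangle (u := r) (v := x) (w := q.penultimate)
    have hd'' := hconn.dist_triangle (u := r) (v := q.penultimate) (w := u)
    rw [dist_eq_one_iff_adj.2 (Walk.adj_penultimate hq0)] at hd''
    have : q.penultimate = y := hT.eq_of_adj_of_dist_add_one (r := r)
      (Walk.adj_penultimate hq0) hadj.symm (by omega) (by omega)
    subst this
    omega
  · have := hconn.dist_triangle (u := x) (v := u) (w := y)
    rw [dist_eq_one_iff_adj.2 hadj] at this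
    omega

variable {s : Set X}

lemma IsAncestor.of_preconnected (hT : T.IsTree) (hs : (T.induce s).Preconnected) (hx : x ∈ s)
    (hmin : ∀ y ∈ s, T.dist r x ≤ T.dist r y) (hz : z ∈ s) : T.IsAncestor r x z := by
  obtain ⟨w⟩ := hs ⟨x, hx⟩ ⟨z, hz⟩
  suffices ∀ {u v : s} (w : (T.induce s).Walk u v), T.IsAncestor r x u → T.IsAncestor r x v from
    this w (.refl T r x)
  intro u v w
  induction w with
  | nil => exact id
  | cons h _ ih => exact fun hu => ih (hu.of_adj hT h (hmin _ (Subtype.prop _)))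

lemma IsTree.exists_dist_eq_of_preconnected (hT : T.IsTree) (hs : (T.induce s).Preconnected)
    (hx : x ∈ s) (hy : y ∈ s) {c : ℕ} (hxc : T.dist r x ≤ c) (hcy : c ≤ T.dist r y) :
    ∃ z ∈ s, T.dist r z = c := by
  obtain ⟨w⟩ := hs ⟨x, hx⟩ ⟨y, hy⟩
  suffices ∀ {u v : s} (w : (T.induce s).Walk u v), T.dist r u ≤ c → c ≤ T.dist r v →
      ∃ z ∈ s, T.dist r z = c from this w hxc hcy
  intro u v w
  induction w with
  | nil => exact fun hu hv => ⟨_, Subtype.prop _, le_antisymm hu hv⟩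
  | @cons u u' v h _ ih =>
    intro hu hv
    rcases eq_or_lt_of_le hu with heq | hlt
    · exact ⟨u, u.2, heq⟩
    · have := hT.dist_eq_dist_add_one_of_adj r (show T.Adj u u' from h)
      exact ih (by omega) hv

lemma IsTree.dist_add_two_le_of_preconnected (hT : T.IsTree) (hs : (T.induce s).Preconnected)
    (hx : x ∈ s) (hy : y ∈ s) {q c : ℕ} (hc : c < q) (hmod : ∀ z ∈ s, T.dist r z % q ≠ c) :
    T.dist r y + 2 ≤ T.dist r x + q := by
  by_contra! hfar
  obtain ⟨n, hxn, hnq, hn⟩ := Nat.exists_between_mod_eq (T.dist r x) hc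
  obtain ⟨z, hz, rfl⟩ := hT.exists_dist_eq_of_preconnected hs hx hy hxn (by omega)
  exact hmod z hz hn

end SimpleGraph

namespace TreeDecomp

open SimpleGraph

variable {V : Type} {G : SimpleGraph V} (D : TreeDecomp V G)

def region (L : List V) : Set D.X := {x | ∃ v ∈ L, v ∈ D.B x}

variable {D}

lemma region_mono {L L' : List V} (h : L ⊆ L') : D.region L ⊆ D.region L' :=
  fun _ ⟨v, hv, hx⟩ => ⟨v, h hv, hx⟩

lemma region_nonempty {L : List V} (hL : L ≠ []) : (D.region L).Nonempty := by
  obtain ⟨v, hv⟩ := List.exists_mem_of_ne_nil L hL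
  obtain ⟨x, hx⟩ := D.cover v
  exact ⟨x, v, hv, hx⟩

variable (D) in
lemma preconnected_induce_bags (v : V) : (D.T.induce {x | v ∈ D.B x}).Preconnected := by
  rintro ⟨x, hx⟩ ⟨y, hy⟩
  obtain ⟨p⟩ := D.tree.connected x y
  exact ⟨p.bypass.induce _ fun z hz => D.subtree v x z y _ p.bypass_isPath hz hx hy⟩

lemma preconnected_induce_region {L : List V} (hL : L.IsChain G.Adj) :
    (D.T.induce (D.region L)).Preconnected := by
  have region_cons (v : V) (L : List V) :
      D.region (v :: L) = {x | v ∈ D.B x} ∪ D.region L := by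
    ext x; simp [region]
  induction hL with
  | nil => rintro ⟨x, v, hv, -⟩; simp at hv
  | singleton v =>
    rw [show D.region [v] = {x | v ∈ D.B x} by ext x; simp [region]]
    exact D.preconnected_induce_bags v
  | @cons_cons v u L hvu _ ih =>
    obtain ⟨z, hvz, huz⟩ := D.edges v u hvu
    rw [region_cons]
    exact (induce_union_connected (D.preconnected_induce_bags v) ih
      ⟨z, hvz, u, by simp, huz⟩).preconnected

lemma mem_bag_of_isAncestor {r x y z : D.X} (hxy : D.T.IsAncestor r x y)
    (hyz : D.T.IsAncestor r y z) {v : V} (hx : v ∈ D.B x) (hz : v ∈ D.B z) : v ∈ D.B y := by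
  obtain ⟨p, hp, hy⟩ := hxy.exists_isPath_mem_support D.tree.connected hyz
  exact D.subtree v x y z p hp hy hx hz

variable {r : D.X}

variable (D) in
def HasRoomAtTop (r : D.X) (P : List V) : Prop :=
  ∀ x ∈ D.region P, (∀ y ∈ D.region P, D.T.dist r x ≤ D.T.dist r y) → ∃ o ∈ D.B x, o ∉ P

lemma exists_mem_region_forall_dist_le {L : List V} (hL : L ≠ []) :
    ∃ x ∈ D.region L, ∀ y ∈ D.region L, D.T.dist r x ≤ D.T.dist r y :=
  ⟨_, Function.argminOn_mem _ _ (region_nonempty hL),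
    fun _ hy => Function.argminOn_le (D.T.dist r) _ hy⟩

lemma mem_bag_of_adj {Q : List V} (hQ : Q.IsChain G.Adj) {xs x : D.X}
    (hxs : ∀ z ∈ D.region Q, D.T.IsAncestor r xs z) (hx : x ∈ D.region Q)
    (hmin : ∀ y ∈ D.region Q, D.T.dist r x ≤ D.T.dist r y)
    {o q : V} (ho : o ∈ D.B xs) (hq : q ∈ Q) (hoq : G.Adj o q) : o ∈ D.B x := by
  obtain ⟨z, hoz, hqz⟩ := D.edges o q hoq
  exact mem_bag_of_isAncestor (hxs x hx)
    (.of_preconnected D.tree (preconnected_induce_region hQ) hx hmin ⟨q, hq, hqz⟩) ho hoz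

lemma length_add_one_le_mul_of_runs {P : List V} (hP : P.IsChain G.Adj) {xs : D.X}
    (hxs : xs ∈ D.region P) (hmin : ∀ y ∈ D.region P, D.T.dist r xs ≤ D.T.dist r y)
    {N : ℕ} (hN : 1 ≤ N)
    (hruns : ∀ Q, Q <:+: P → Q ≠ [] → (∀ x ∈ D.region Q, D.T.dist r xs < D.T.dist r x) →
      D.HasRoomAtTop r Q → Q.length + 1 ≤ N) :
    P.length + 1 ≤ ((P.filter (· ∈ D.B xs)).length + 1) * N := by
  have hanc : ∀ z ∈ D.region P, D.T.IsAncestor r xs z :=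
    fun z hz => .of_preconnected D.tree (preconnected_induce_region hP) hxs hmin hz
  apply List.length_add_one_le_of_runs _ hN
  intro A Q B hPQ hQ hQout hA hB
  have hQout' : ∀ v ∈ Q, v ∉ D.B xs := fun v hv => by simpa using hQout v hv
  have hinfix : Q <:+: P := ⟨A, B, hPQ.symm⟩
  have hQP : D.region Q ⊆ D.region P := region_mono hinfix.subset
  refine hruns Q hinfix hQ (fun x hx => ?_) (fun x hx hmin' => ?_)
  · obtain ⟨v, hv, hvx⟩ := hx
    exact (hanc x (hQP ⟨v, hv, hvx⟩)).dist_lt D.tree.connected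
      (by rintro rfl; exact hQout' v hv hvx)
  · have hAB : A ≠ [] ∨ B ≠ [] := by
      obtain ⟨v, hv, hvxs⟩ := hxs
      by_contra! h
      simp only [hPQ, h.1, h.2, List.nil_append, List.append_nil] at hv
      exact hQout' v hv hvxs
    obtain ⟨s, hs, q, hq, hsq⟩ := List.exists_rel_of_isChain_append (hPQ ▸ hP) hQ hAB
    have hsxs : s ∈ D.B xs := by
      rcases hs with hs | hs
      · simpa using hA s hs
      · simpa using hB s hs
    refine ⟨s, mem_bag_of_adj (hP.infix hinfix) (fun z hz => hanc z (hQP hz)) hx hmin' hsxs hq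
      (hsq.elim id G.adj_symm), fun hsQ => hQout' s hsQ hsxs⟩

lemma length_add_one_le_pow {a : ℕ} (hwidth : ∀ x, (D.B x).card ≤ a) (j : ℕ) :
    ∀ (m : ℕ) (P : List V), P.IsChain G.Adj → P.Nodup → P ≠ [] →
      (∀ x ∈ D.region P, m < D.T.dist r x ∧ D.T.dist r x ≤ m + j) → D.HasRoomAtTop r P →
      P.length + 1 ≤ a ^ j := by
  induction j with
  | zero =>
    intro m P _ _ hne hwin _
    obtain ⟨x, hx⟩ := region_nonempty hne
    have := hwin x hx
    omega
  | succ j ih =>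
    intro m P hP hnd hne hwin hroom
    obtain ⟨xs, hxs, hmin⟩ := exists_mem_region_forall_dist_le (r := r) hne
    obtain ⟨o, ho, hoP⟩ := hroom xs hxs hmin
    have hS : (P.filter (· ∈ D.B xs)).length + 1 ≤ a := by
      have hnd' : (o :: P.filter (· ∈ D.B xs)).Nodup :=
        (hnd.filter _).cons fun h => hoP (List.mem_of_mem_filter h)
      refine le_trans ?_ (hwidth xs)
      simpa using hnd'.length_le_card_of_forall_mem (s := D.B xs) (by simp [ho])
    have hruns : ∀ Q, Q <:+: P → Q ≠ [] →
        (∀ x ∈ D.region Q, D.T.dist r xs < D.T.dist r x) → D.HasRoomAtTop r Q →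
        Q.length + 1 ≤ a ^ j := by
      refine fun Q hQP hQ hdeep hroomQ => ih _ Q (hP.infix hQP) (hnd.sublist hQP.sublist) hQ
        (fun x hx => ⟨hdeep x hx, ?_⟩) hroomQ
      have := hwin x (region_mono hQP.subset hx)
      have := hwin xs hxs
      omega
    calc P.length + 1 ≤ ((P.filter (· ∈ D.B xs)).length + 1) * a ^ j :=
          length_add_one_le_mul_of_runs hP hxs hmin (Nat.one_le_pow _ _ (by omega)) hruns
      _ ≤ a ^ (j + 1) := by rw [pow_succ']; exact Nat.mul_le_mul_right _ hS

lemma length_add_one_le_succ_mul_pow {a : ℕ} (hwidth : ∀ x, (D.B x).card ≤ a) {P : List V}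
    (hP : P.IsChain G.Adj) (hnd : P.Nodup)
    {xs : D.X} (hxs : xs ∈ D.region P) (hmin : ∀ y ∈ D.region P, D.T.dist r xs ≤ D.T.dist r y)
    {j : ℕ} (hwin : ∀ x ∈ D.region P, D.T.dist r x ≤ D.T.dist r xs + j) :
    P.length + 1 ≤ (a + 1) * a ^ j := by
  have hS : (P.filter (· ∈ D.B xs)).length ≤ a :=
    ((hnd.filter _).length_le_card_of_forall_mem (by simp)).trans (hwidth xs)
  have ha : 1 ≤ a := by
    obtain ⟨v, -, hv⟩ := hxs
    exact (Finset.card_pos.2 ⟨v, hv⟩).trans_le (hwidth xs)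
  calc P.length + 1 ≤ ((P.filter (· ∈ D.B xs)).length + 1) * a ^ j :=
        length_add_one_le_mul_of_runs hP hxs hmin (Nat.one_le_pow _ _ ha)
          fun Q hQP hQ hdeep hroomQ =>
            length_add_one_le_pow hwidth j _ Q (hP.infix hQP) (hnd.sublist hQP.sublist) hQ
              (fun x hx => ⟨hdeep x hx, hwin x (region_mono hQP.subset hx)⟩) hroomQ
    _ ≤ (a + 1) * a ^ j := Nat.mul_le_mul_right _ (by omega)

variable [Fintype V]

variable (D) in
noncomputable def levelClass (r : D.X) (q c : ℕ) : Finset V :=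
  Finset.univ.filter fun v => ∃ x, v ∈ D.B x ∧ D.T.dist r x % q = c

/-- Level classes only use depths divisible by `s + 1`, while two bags sharing a vertex differ in
depth by at most `s`. -/
lemma pairwiseDisjoint_levelClass {s t : ℕ}
    (helong : ∀ x y : D.X, (D.B x ∩ D.B y).Nonempty → D.T.dist x y ≤ s) :
    (Finset.range t : Set ℕ).PairwiseDisjoint
      fun i => D.levelClass r ((s + 1) * t) (i * (s + 1)) := by
  intro i _ i' _ hne
  refine Finset.disjoint_left.2 fun v hv hv' => hne ?_
  simp only [levelClass, Finset.mem_filter, Finset.mem_univ, true_and] at hv hv'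
  obtain ⟨x, hvx, hx⟩ := hv
  obtain ⟨x', hvx', hx'⟩ := hv'
  have hdvd {y : D.X} {j : ℕ} (h : D.T.dist r y % ((s + 1) * t) = j * (s + 1)) :
      D.T.dist r y ≡ 0 [MOD s + 1] :=
    Nat.modEq_zero_iff_dvd.2 <| (Nat.dvd_mod_iff (Dvd.intro t rfl)).1 (h ▸ Dvd.intro_left j rfl)
  have hclose := helong x x' ⟨v, Finset.mem_inter.2 ⟨hvx, hvx'⟩⟩
  have h1 := D.tree.connected.dist_triangle (u := r) (v := x) (w := x')
  have h2 := D.tree.connected.dist_triangle (u := r) (v := x') (w := x)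
  have h3 : D.T.dist x' x = D.T.dist x x' := dist_comm
  have heq : D.T.dist r x = D.T.dist r x' :=
    ((hdvd hx).trans (hdvd hx').symm).eq_of_abs_lt (abs_sub_lt_iff.2 ⟨by omega, by omega⟩)
  rw [heq, hx'] at hx
  exact Nat.eq_of_mul_eq_mul_right (Nat.succ_pos s) hx.symm

end TreeDecomp

open SimpleGraph TreeDecomp in
theorem trimming_of_bounded_elongation_treewidth_general {V : Type} [Fintype V]
    (G : SimpleGraph V) (w : V → ℝ) (hw : ∀ v, 0 ≤ w v)
    (k s t : ℕ) (hk : 2 ≤ k) (ht : 2 ≤ t)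
    (D : TreeDecomp V G)
    (hwidth : ∀ x : D.X, (D.B x).card ≤ k + 1)
    (helong : ∀ x y : D.X, ((D.B x) ∩ (D.B y)).Nonempty → D.T.dist x y ≤ s) :
    ∃ U : Finset V,
      IsTrimming G w t
        (((k : ℝ) + 1) *
            (((k : ℝ) + 1) ^ ((s + 1) * t - 2) * (((k : ℝ) + 1) + 1) - 2) /
          (((k : ℝ) + 1) - 1)) U := by
  obtain ⟨r⟩ := D.tree.connected.nonempty
  obtain ⟨i, hi, hlight⟩ := Finset.exists_sum_le_div_of_pairwiseDisjoint hw
    (Finset.nonempty_range_iff.2 (by omega : t ≠ 0)) (pairwiseDisjoint_levelClass (r := r) helong)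
  rw [Finset.card_range] at hlight
  rw [Finset.mem_range] at hi
  refine ⟨D.levelClass r ((s + 1) * t) (i * (s + 1)), hlight, fun u v p hp hlong => ?_⟩
  by_contra! hmiss
  have hP := p.isChain_adj_support
  obtain ⟨xs, hxs, hmin⟩ := exists_mem_region_forall_dist_le (r := r) p.support_ne_nil
  have hwin (x) (hx : x ∈ D.region p.support) :
      D.T.dist r x ≤ D.T.dist r xs + ((s + 1) * t - 2) := by
    have := D.tree.dist_add_two_le_of_preconnected (preconnected_induce_region hP) hxs hx
      (q := (s + 1) * t) (c := i * (s + 1)) (by nlinarith) fun x ⟨v, hv, hvx⟩ hx => hmiss v hv (by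
        simpa [levelClass] using ⟨x, hvx, hx⟩)
    omega
  have hlen := length_add_one_le_succ_mul_pow hwidth hP hp.support_nodup hxs hmin hwin
  rw [p.length_support] at hlen
  have hlen' : (p.length : ℝ) + 2 ≤ ((k : ℝ) + 1) ^ ((s + 1) * t - 2) * (((k : ℝ) + 1) + 1) := by
    rw [mul_comm]; exact_mod_cast hlen
  have hk' : (2 : ℝ) ≤ k := by exact_mod_cast hk
  rw [gt_iff_lt, div_lt_iff₀ (by linarith)] at hlong
  nlinarith

/-- If a vertex-weighted graph has a tree decomposition of width at most `k ≥ 2` and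
elongation at most `s ≥ 2`, and `t ≥ 2`, then with `a = k+1` it has a
`(t, (k+1)(a^{(s+1)t-2}(a+1) - 2)/(a-1))`-trimming. -/
theorem trimming_of_bounded_elongation_treewidth {V : Type} [Fintype V]
    (G : SimpleGraph V) (w : V → ℝ) (hw : ∀ v, 0 ≤ w v)
    (k s t : ℕ) (hk : 2 ≤ k) (hs : 2 ≤ s) (ht : 2 ≤ t)
    (D : TreeDecomp V G)
    (hwidth : ∀ x : D.X, (D.B x).card ≤ k + 1)
    (helong : ∀ x y : D.X, ((D.B x) ∩ (D.B y)).Nonempty → D.T.dist x y ≤ s) :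
    ∃ U : Finset V,
      IsTrimming G w t
        (((k : ℝ) + 1) *
            (((k : ℝ) + 1) ^ ((s + 1) * t - 2) * (((k : ℝ) + 1) + 1) - 2) /
          (((k : ℝ) + 1) - 1)) U :=
  trimming_of_bounded_elongation_treewidth_general G w hw k s t hk ht D hwidth helong
end

section
/- In the dependency graph G defined from a labeling with stopping lines through all point x-coordinates, every vertex has in-degree at most 2 and out-degree at most 2. -/
/-!
Two out-neighbours `q, r` of `p` have overlapping labels: the stopping line at `q_x` lies to
the right of `z(p) + l(p)`, so it cannot lie left of `z(r)`, i.e. `z(r) < q_x ≤ z(q) + l(q)`,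
and symmetrically. Dually, two in-neighbours `q, r` of `p` have overlapping labels because the
stopping line at `r_x ≤ z(p)` must lie left of `z(q) + l(q)`. Labels of y-overlapping points
are disjoint, so the neighbours of `p` are pairwise non-y-overlapping; but they all lie in the
open strip of height 2 around `p_y`, which holds no three such points.
-/

/-- The edge relation of the dependency graph: `(p,q)` is an edge iff `p_x < q_x`,
`p` and `q` y-overlap, and no stopping coordinate `x ∈ S'` satisfies
`z(p) + l(p) ≤ x ≤ z(q)`. -/
def DepEdge (l z : ℝ × ℝ → ℝ) (S' : Set ℝ) (p q : ℝ × ℝ) : Prop :=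
  p.1 < q.1 ∧ |p.2 - q.2| < 1 ∧ ¬ ∃ x ∈ S', z p + l p ≤ x ∧ x ≤ z q

theorem Set.ncard_le_two_of_pairwise_one_le_abs_sub {α : Type*} {s : Set α} (f : α → ℝ)
    (c : ℝ) (hc : ∀ a ∈ s, |f a - c| < 1)
    (hs : s.Pairwise fun a b => 1 ≤ |f a - f b|) : s.ncard ≤ 2 := by
  rcases s.finite_or_infinite with hfin | hinf
  · by_contra! h
    obtain ⟨a, b, d, ha, hb, hd, hab, had, hbd⟩ := (Set.two_lt_ncard_iff hfin).mp h
    have ha' := abs_sub_lt_iff.mp (hc a ha)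
    have hb' := abs_sub_lt_iff.mp (hc b hb)
    have hd' := abs_sub_lt_iff.mp (hc d hd)
    rcases le_abs.mp (hs ha hb hab) with h₁ | h₁ <;>
      rcases le_abs.mp (hs ha hd had) with h₂ | h₂ <;>
      rcases le_abs.mp (hs hb hd hbd) with h₃ | h₃ <;>
      linarith
  · rw [hinf.ncard]
    omega

structure IsLabeling (Q : Set (ℝ × ℝ)) (l z : ℝ × ℝ → ℝ) : Prop where
  fst_sub_le : ∀ p ∈ Q, p.1 - l p ≤ z p
  le_fst : ∀ p ∈ Q, z p ≤ p.1
  label_disjoint : ∀ p ∈ Q, ∀ q ∈ Q, p ≠ q → |p.2 - q.2| < 1 →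
    z p + l p ≤ z q ∨ z q + l q ≤ z p

section Labeling

variable {Q : Set (ℝ × ℝ)} {l z : ℝ × ℝ → ℝ} {S' : Set ℝ} {p q r : ℝ × ℝ}

theorem DepEdge.lt_of_le_mem {x : ℝ} (h : DepEdge l z S' p q) (hx : x ∈ S')
    (hpx : z p + l p ≤ x) : z q < x :=
  lt_of_not_ge fun hxq => h.2.2 ⟨x, hx, hpx, hxq⟩

theorem DepEdge.label_add_le (hL : IsLabeling Q l z) (hp : p ∈ Q) (hq : q ∈ Q)
    (h : DepEdge l z S' p q) : z p + l p ≤ z q := by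
  have hpq : p ≠ q := fun e => h.1.ne (congrArg Prod.fst e)
  rcases hL.label_disjoint p hp q hq hpq h.2.1 with hle | hle
  · exact hle
  · linarith [hL.le_fst p hp, hL.fst_sub_le q hq, h.1]

theorem IsLabeling.one_le_abs_sub (hL : IsLabeling Q l z) (hq : q ∈ Q) (hr : r ∈ Q)
    (hqr : q ≠ r) (hr_lt : z r < z q + l q) (hq_lt : z q < z r + l r) : 1 ≤ |q.2 - r.2| := by
  by_contra! hy
  rcases hL.label_disjoint q hq r hr hqr hy with hle | hle <;> linarith

theorem DepEdge.lt_label_add_of_same_source (hL : IsLabeling Q l z) (hp : p ∈ Q) (hq : q ∈ Q)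
    (hqS : q.1 ∈ S') (hpq : DepEdge l z S' p q) (hpr : DepEdge l z S' p r) : z r < z q + l q :=
  calc z r < q.1 := hpr.lt_of_le_mem hqS ((hpq.label_add_le hL hp hq).trans (hL.le_fst q hq))
    _ ≤ z q + l q := by linarith [hL.fst_sub_le q hq]

theorem DepEdge.lt_label_add_of_same_target (hL : IsLabeling Q l z) (hp : p ∈ Q) (hr : r ∈ Q)
    (hrS : r.1 ∈ S') (hqp : DepEdge l z S' q p) (hrp : DepEdge l z S' r p) : z r < z q + l q := by
  have hrx : r.1 ≤ z p := by linarith [hrp.label_add_le hL hr hp, hL.fst_sub_le r hr]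
  calc z r ≤ r.1 := hL.le_fst r hr
    _ < z q + l q := lt_of_not_ge fun h => (hqp.lt_of_le_mem hrS h).not_ge hrx

end Labeling

theorem dependency_graph_degree_bound_general (Q : Set (ℝ × ℝ))
    (l z : ℝ × ℝ → ℝ) (S' : Set ℝ)
    (hz : ∀ p ∈ Q, p.1 - l p ≤ z p ∧ z p ≤ p.1)
    (hno : ∀ p ∈ Q, ∀ q ∈ Q, p ≠ q → |p.2 - q.2| < 1 →
      z p + l p ≤ z q ∨ z q + l q ≤ z p)
    (hS : ∀ q ∈ Q, q.1 ∈ S' ∧ q.1 - l q ∈ S') :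
    ∀ p ∈ Q,
      {q | q ∈ Q ∧ DepEdge l z S' p q}.ncard ≤ 2 ∧
      {q | q ∈ Q ∧ DepEdge l z S' q p}.ncard ≤ 2 := by
  intro p hp
  have hL : IsLabeling Q l z := ⟨fun p hp => (hz p hp).1, fun p hp => (hz p hp).2, hno⟩
  constructor
  · refine Set.ncard_le_two_of_pairwise_one_le_abs_sub Prod.snd p.2
      (fun q hq => abs_sub_comm p.2 q.2 ▸ hq.2.2.1) fun q hq r hr hqr => ?_
    exact hL.one_le_abs_sub hq.1 hr.1 hqr
      (hq.2.lt_label_add_of_same_source hL hp hq.1 (hS q hq.1).1 hr.2)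
      (hr.2.lt_label_add_of_same_source hL hp hr.1 (hS r hr.1).1 hq.2)
  · refine Set.ncard_le_two_of_pairwise_one_le_abs_sub Prod.snd p.2
      (fun q hq => hq.2.2.1) fun q hq r hr hqr => ?_
    exact hL.one_le_abs_sub hq.1 hr.1 hqr
      (hq.2.lt_label_add_of_same_target hL hp hr.1 (hS r hr.1).1 hr.2)
      (hr.2.lt_label_add_of_same_target hL hp hq.1 (hS q hq.1).1 hq.2)

/-- In the dependency graph of a labeling, with stopping lines through all point
x-coordinates (and through all leftmost label positions), every vertex has in-degree
at most 2 and out-degree at most 2. -/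
theorem dependency_graph_degree_bound (Q : Set (ℝ × ℝ)) (hQ : Q.Finite)
    (l z : ℝ × ℝ → ℝ) (S' : Set ℝ)
    (hl : ∀ p ∈ Q, 0 < l p)
    (hz : ∀ p ∈ Q, p.1 - l p ≤ z p ∧ z p ≤ p.1)
    (hno : ∀ p ∈ Q, ∀ q ∈ Q, p ≠ q → |p.2 - q.2| < 1 →
      z p + l p ≤ z q ∨ z q + l q ≤ z p)
    (hS : ∀ q ∈ Q, q.1 ∈ S' ∧ q.1 - l q ∈ S') :
    ∀ p ∈ Q,
      {q | q ∈ Q ∧ DepEdge l z S' p q}.ncard ≤ 2 ∧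
      {q | q ∈ Q ∧ DepEdge l z S' q p}.ncard ≤ 2 :=
  dependency_graph_degree_bound_general Q l z S' hz hno hS
end

section
/- Planarity of the dependency graph: the directed graph G defined on a labeling (Q,z) with stopping lines at all point x-coordinates (edge (p,q) iff p_x < q_x, |p_y - q_y| < 1, and no stopping coordinate x satisfies z(p)+l(p) ≤ x ≤ z(q)) is planar; in fact, the straight-line drawing mapping each vertex to its own point in ℝ² and each edge to the segment between its endpoints has no two vertex-disjoint edges whose segments intersect. -/
/-- Arithmetic core of the crossed case: a strictly lower segment cannot meet
a strictly upper segment. Edge 1 goes from (px,py) to (qx,qy), edge 2 from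
(rx,ry) to (sx,sy); (cx,cy) lies on both lines with the stated x-bounds. -/
lemma cross_aux {px py qx qy rx ry sx sy cx cy : ℝ}
    (h1 : px < qx) (h2 : rx < sx) (hrp : rx ≤ px) (hsq : sx ≤ qx)
    (hy1 : py < ry) (hy2 : qy < sy) (hpq : py ≤ qy) (hrs : ry ≤ sy)
    (hcx1 : px ≤ cx) (hcx2 : cx ≤ sx)
    (hg1 : (qx - cx) * py + (cx - px) * qy = (qx - px) * cy)
    (hg2 : (sx - cx) * ry + (cx - rx) * sy = (sx - rx) * cy) : False := by
  rcases eq_or_lt_of_le (hcx1.trans hcx2) with he | hlt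
  · -- px = sx, hence cx = px = sx
    have hcp : cx = px := le_antisymm (he ▸ hcx2) hcx1
    have hcs : cx = sx := hcp.trans he
    have e1 : (qx - px) * (py - cy) = 0 := by
      linear_combination hg1 + (py - qy) * hcp
    have e2 : (sx - rx) * (sy - cy) = 0 := by
      linear_combination hg2 + (ry - sy) * hcs
    rcases mul_eq_zero.mp e1 with h | h
    · exact absurd h (sub_ne_zero.mpr h1.ne')
    rcases mul_eq_zero.mp e2 with h' | h'
    · exact absurd h' (sub_ne_zero.mpr h2.ne')
    linarith
  · have hE1 : 0 < (qx - px) * ((sx - px) * (ry - py) + (px - rx) * (sy - py)) := by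
      have t1 := mul_pos (sub_pos.2 hlt) (sub_pos.2 hy1)
      have t2 := mul_nonneg (sub_nonneg.2 hrp) (show (0:ℝ) ≤ sy - py by linarith)
      exact mul_pos (sub_pos.2 h1) (by linarith)
    have hE2 : 0 < (sx - rx) * ((qx - sx) * (sy - py) + (sx - px) * (sy - qy)) := by
      have t1 := mul_nonneg (sub_nonneg.2 hsq) (show (0:ℝ) ≤ sy - py by linarith)
      have t2 := mul_pos (sub_pos.2 hlt) (sub_pos.2 hy2)
      exact mul_pos (sub_pos.2 h2) (by linarith)
    have hsum : (sx - cx) * ((qx - px) * ((sx - px) * (ry - py) + (px - rx) * (sy - py)))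
        + (cx - px) * ((sx - rx) * ((qx - sx) * (sy - py) + (sx - px) * (sy - qy))) = 0 := by
      linear_combination (sx - px) * ((qx - px) * hg2 - (sx - rx) * hg1)
    rcases lt_or_eq_of_le hcx2 with h | h
    · nlinarith [mul_pos (sub_pos.2 h) hE1, mul_nonneg (sub_nonneg.2 hcx1) hE2.le]
    · have hpx : px < cx := by rw [h]; exact hlt
      nlinarith [mul_pos (sub_pos.2 hpx) hE2, mul_nonneg (sub_nonneg.2 hcx2) hE1.le]

lemma seg_left {p q c : ℝ × ℝ} {a b : ℝ} (ha : 0 ≤ a) (hb : 0 ≤ b)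
    (hab : a + b = 1) (hc : a • p + b • q = c) (hx : p.1 < q.1) (h : c.1 ≤ p.1) :
    c = p := by
  have hcx : a * p.1 + b * q.1 = c.1 := by
    have := congrArg Prod.fst hc; simpa using this
  have key : b * (q.1 - p.1) = c.1 - p.1 := by linear_combination hcx - p.1 * hab
  have hb0 : b = 0 := le_antisymm (by nlinarith) hb
  have ha1 : a = 1 := by linarith
  rw [← hc, hb0, ha1]; simp

lemma seg_right {p q c : ℝ × ℝ} {a b : ℝ} (ha : 0 ≤ a) (hb : 0 ≤ b)
    (hab : a + b = 1) (hc : a • p + b • q = c) (hx : p.1 < q.1) (h : q.1 ≤ c.1) :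
    c = q := by
  have hcx : a * p.1 + b * q.1 = c.1 := by
    have := congrArg Prod.fst hc; simpa using this
  have key : a * (q.1 - p.1) = q.1 - c.1 := by linear_combination q.1 * hab - hcx
  have ha0 : a = 0 := le_antisymm (by nlinarith) ha
  have hb1 : b = 1 := by linarith
  rw [← hc, ha0, hb1]; simp

lemma nested_aux {S' : Set ℝ} {zp2 lp2 zq2 zp1 lp1 zq1 lq1 x1 : ℝ}
    (hgap2 : ∀ x ∈ S', zp2 + lp2 ≤ x → zq2 < x)
    (hx1S : x1 ∈ S') (hzl : zp1 ≤ x1) (hzu : x1 ≤ zp1 + lp1)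
    (hbasic1 : zp1 + lp1 ≤ zq1) (h1 : zp2 + lp2 ≤ zp1) (h2 : zq1 + lq1 ≤ zq2)
    (hlq1 : 0 ≤ lq1) : False := by
  have := hgap2 x1 hx1S (by linarith)
  linarith

lemma edge_gap {l z : ℝ × ℝ → ℝ} {S' : Set ℝ} {p q : ℝ × ℝ}
    (de : DepEdge l z S' p q) : ∀ x ∈ S', z p + l p ≤ x → z q < x := by
  have h := de.2.2
  push_neg at h
  exact h

lemma edge_basic (Q : Set (ℝ × ℝ)) (l z : ℝ × ℝ → ℝ) (S' : Set ℝ)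
    (hz : ∀ p ∈ Q, p.1 - l p ≤ z p ∧ z p ≤ p.1)
    (hno : ∀ p ∈ Q, ∀ q ∈ Q, p ≠ q → |p.2 - q.2| < 1 →
      z p + l p ≤ z q ∨ z q + l q ≤ z p)
    {p q : ℝ × ℝ} (hp : p ∈ Q) (hq : q ∈ Q) (de : DepEdge l z S' p q) :
    z p + l p ≤ z q := by
  have hpq : p ≠ q := by
    intro h
    rw [h] at de
    exact lt_irrefl _ de.1
  rcases hno p hp q hq hpq de.2.1 with h | h
  · exact h
  · exfalso
    have h1 := (hz p hp).2
    have h2 := (hz q hq).1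
    have := de.1
    linarith

lemma keyL (Q : Set (ℝ × ℝ)) (l z : ℝ × ℝ → ℝ) (S' : Set ℝ)
    (hz : ∀ p ∈ Q, p.1 - l p ≤ z p ∧ z p ≤ p.1)
    (hno : ∀ p ∈ Q, ∀ q ∈ Q, p ≠ q → |p.2 - q.2| < 1 →
      z p + l p ≤ z q ∨ z q + l q ≤ z p)
    (hS : ∀ q ∈ Q, q.1 ∈ S' ∧ q.1 - l q ∈ S')
    {p q r : ℝ × ℝ} (hp : p ∈ Q) (hq : q ∈ Q) (hr : r ∈ Q)
    (de : DepEdge l z S' p q) (hrp : r ≠ p) (hrq : r ≠ q)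
    (o1 : |r.2 - p.2| < 1) (o2 : |r.2 - q.2| < 1) :
    (z r + l r ≤ z p ∧ r.1 ≤ p.1) ∨ (z q + l q ≤ z r ∧ q.1 ≤ r.1) := by
  have gap := edge_gap de
  rcases hno r hr p hp hrp o1 with h | h
  · refine Or.inl ⟨h, ?_⟩
    have h1 := (hz r hr).1
    have h2 := (hz p hp).2
    linarith
  · rcases hno r hr q hq hrq o2 with h' | h'
    · exfalso
      have hx := gap r.1 (hS r hr).1 (h.trans (hz r hr).2)
      have h1 := (hz r hr).1
      linarith
    · refine Or.inr ⟨h', ?_⟩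
      have h1 := (hz q hq).1
      have h2 := (hz r hr).2
      linarith

/-- Nested case: both endpoints of edge 2 y-overlap both endpoints of edge 1. -/
lemma nested_main (Q : Set (ℝ × ℝ)) (l z : ℝ × ℝ → ℝ) (S' : Set ℝ)
    (hl : ∀ p ∈ Q, 0 < l p)
    (hz : ∀ p ∈ Q, p.1 - l p ≤ z p ∧ z p ≤ p.1)
    (hno : ∀ p ∈ Q, ∀ q ∈ Q, p ≠ q → |p.2 - q.2| < 1 →
      z p + l p ≤ z q ∨ z q + l q ≤ z p)
    (hS : ∀ q ∈ Q, q.1 ∈ S' ∧ q.1 - l q ∈ S')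
    {p₁ q₁ p₂ q₂ : ℝ × ℝ}
    (hp₁ : p₁ ∈ Q) (hq₁ : q₁ ∈ Q) (hp₂ : p₂ ∈ Q) (hq₂ : q₂ ∈ Q)
    (de1 : DepEdge l z S' p₁ q₁) (de2 : DepEdge l z S' p₂ q₂)
    (h21 : p₂ ≠ p₁) (h23 : p₂ ≠ q₁) (h41 : q₂ ≠ p₁) (h43 : q₂ ≠ q₁)
    (ov1 : |p₂.2 - p₁.2| < 1) (ov2 : |p₂.2 - q₁.2| < 1)
    (ov3 : |q₂.2 - p₁.2| < 1) (ov4 : |q₂.2 - q₁.2| < 1)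
    (CPQ : q₂.1 ≤ p₁.1 → False) (CQP : q₁.1 ≤ p₂.1 → False) : False := by
  have basic1 := edge_basic Q l z S' hz hno hp₁ hq₁ de1
  have gap2 := edge_gap de2
  rcases keyL Q l z S' hz hno hS hp₁ hq₁ hp₂ de1 h21 h23 ov1 ov2 with ⟨hL1, _⟩ | ⟨_, h⟩
  · rcases keyL Q l z S' hz hno hS hp₁ hq₁ hq₂ de1 h41 h43 ov3 ov4 with ⟨_, h⟩ | ⟨hR1, _⟩
    · exact CPQ h
    · exact nested_aux gap2 (hS p₁ hp₁).1 (hz p₁ hp₁).2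
        (by linarith [(hz p₁ hp₁).1]) basic1 hL1 hR1 (hl q₁ hq₁).le
  · exact CQP h

/-- Crossed easy case: the two left endpoints y-overlap the other edge. -/
lemma crossPP (Q : Set (ℝ × ℝ)) (l z : ℝ × ℝ → ℝ) (S' : Set ℝ)
    (hl : ∀ p ∈ Q, 0 < l p)
    (hz : ∀ p ∈ Q, p.1 - l p ≤ z p ∧ z p ≤ p.1)
    (hno : ∀ p ∈ Q, ∀ q ∈ Q, p ≠ q → |p.2 - q.2| < 1 →
      z p + l p ≤ z q ∨ z q + l q ≤ z p)
    (hS : ∀ q ∈ Q, q.1 ∈ S' ∧ q.1 - l q ∈ S')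
    {p₁ q₁ p₂ q₂ : ℝ × ℝ}
    (hp₁ : p₁ ∈ Q) (hq₁ : q₁ ∈ Q) (hp₂ : p₂ ∈ Q) (hq₂ : q₂ ∈ Q)
    (de1 : DepEdge l z S' p₁ q₁) (de2 : DepEdge l z S' p₂ q₂)
    (h21 : p₂ ≠ p₁) (h23 : p₂ ≠ q₁) (h12 : p₁ ≠ p₂) (h14 : p₁ ≠ q₂)
    (ov1 : |p₂.2 - p₁.2| < 1) (ov2 : |p₂.2 - q₁.2| < 1)
    (ov3 : |p₁.2 - p₂.2| < 1) (ov4 : |p₁.2 - q₂.2| < 1)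
    (CPQ : q₂.1 ≤ p₁.1 → False) (CQP : q₁.1 ≤ p₂.1 → False) : False := by
  rcases keyL Q l z S' hz hno hS hp₁ hq₁ hp₂ de1 h21 h23 ov1 ov2 with ⟨hL2, _⟩ | ⟨_, h⟩
  · rcases keyL Q l z S' hz hno hS hp₂ hq₂ hp₁ de2 h12 h14 ov3 ov4 with ⟨hL1, _⟩ | ⟨_, h⟩
    · linarith [hl p₁ hp₁, hl p₂ hp₂]
    · exact CPQ h
  · exact CQP h

/-- Crossed easy case: the two right endpoints y-overlap the other edge. -/
lemma crossQQ (Q : Set (ℝ × ℝ)) (l z : ℝ × ℝ → ℝ) (S' : Set ℝ)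
    (hl : ∀ p ∈ Q, 0 < l p)
    (hz : ∀ p ∈ Q, p.1 - l p ≤ z p ∧ z p ≤ p.1)
    (hno : ∀ p ∈ Q, ∀ q ∈ Q, p ≠ q → |p.2 - q.2| < 1 →
      z p + l p ≤ z q ∨ z q + l q ≤ z p)
    (hS : ∀ q ∈ Q, q.1 ∈ S' ∧ q.1 - l q ∈ S')
    {p₁ q₁ p₂ q₂ : ℝ × ℝ}
    (hp₁ : p₁ ∈ Q) (hq₁ : q₁ ∈ Q) (hp₂ : p₂ ∈ Q) (hq₂ : q₂ ∈ Q)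
    (de1 : DepEdge l z S' p₁ q₁) (de2 : DepEdge l z S' p₂ q₂)
    (h41 : q₂ ≠ p₁) (h43 : q₂ ≠ q₁) (h32 : q₁ ≠ p₂) (h34 : q₁ ≠ q₂)
    (ov1 : |q₂.2 - p₁.2| < 1) (ov2 : |q₂.2 - q₁.2| < 1)
    (ov3 : |q₁.2 - p₂.2| < 1) (ov4 : |q₁.2 - q₂.2| < 1)
    (CPQ : q₂.1 ≤ p₁.1 → False) (CQP : q₁.1 ≤ p₂.1 → False) : False := by
  rcases keyL Q l z S' hz hno hS hp₁ hq₁ hq₂ de1 h41 h43 ov1 ov2 with ⟨_, h⟩ | ⟨hR1, _⟩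
  · exact CPQ h
  · rcases keyL Q l z S' hz hno hS hp₂ hq₂ hq₁ de2 h32 h34 ov3 ov4 with ⟨_, h⟩ | ⟨hR2, _⟩
    · exact CQP h
    · linarith [hl q₁ hq₁, hl q₂ hq₂]

set_option maxHeartbeats 1000000 in
/-- Planarity of the dependency graph: in the straight-line drawing that places each
vertex at its own point, no two vertex-disjoint edges have intersecting segments. -/
theorem dependency_graph_planar (Q : Set (ℝ × ℝ))
    (l z : ℝ × ℝ → ℝ) (S' : Set ℝ)
    (hl : ∀ p ∈ Q, 0 < l p)
    (hz : ∀ p ∈ Q, p.1 - l p ≤ z p ∧ z p ≤ p.1)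
    (hno : ∀ p ∈ Q, ∀ q ∈ Q, p ≠ q → |p.2 - q.2| < 1 →
      z p + l p ≤ z q ∨ z q + l q ≤ z p)
    (hS : ∀ q ∈ Q, q.1 ∈ S' ∧ q.1 - l q ∈ S') :
    ∀ p₁ ∈ Q, ∀ q₁ ∈ Q, ∀ p₂ ∈ Q, ∀ q₂ ∈ Q,
      DepEdge l z S' p₁ q₁ → DepEdge l z S' p₂ q₂ →
      p₁ ≠ p₂ → p₁ ≠ q₂ → q₁ ≠ p₂ → q₁ ≠ q₂ →
      segment ℝ p₁ q₁ ∩ segment ℝ p₂ q₂ = ∅ := by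
  intro p₁ hp₁ q₁ hq₁ p₂ hp₂ q₂ hq₂ de1 de2 h12 h14 h32 h34
  rw [Set.eq_empty_iff_forall_notMem]
  rintro c ⟨hm1, hm2⟩
  obtain ⟨a, b, ha, hb, hab, hc⟩ := hm1
  obtain ⟨u, v, hu, hv, huv, hd⟩ := hm2
  have hx1 : p₁.1 < q₁.1 := de1.1
  have hx2 : p₂.1 < q₂.1 := de2.1
  obtain ⟨hyy1a, hyy1b⟩ := abs_lt.mp de1.2.1
  obtain ⟨hyy2a, hyy2b⟩ := abs_lt.mp de2.2.1
  have hcx : a * p₁.1 + b * q₁.1 = c.1 := by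
    have := congrArg Prod.fst hc; simpa using this
  have hcy : a * p₁.2 + b * q₁.2 = c.2 := by
    have := congrArg Prod.snd hc; simpa using this
  have hdx : u * p₂.1 + v * q₂.1 = c.1 := by
    have := congrArg Prod.fst hd; simpa using this
  have hdy : u * p₂.2 + v * q₂.2 = c.2 := by
    have := congrArg Prod.snd hd; simpa using this
  have ex1 : c.1 - p₁.1 = b * (q₁.1 - p₁.1) := by linear_combination p₁.1 * hab - hcx
  have ex1' : q₁.1 - c.1 = a * (q₁.1 - p₁.1) := by linear_combination hcx - q₁.1 * hab
  have ey1 : c.2 - p₁.2 = b * (q₁.2 - p₁.2) := by linear_combination p₁.2 * hab - hcy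
  have ey1' : q₁.2 - c.2 = a * (q₁.2 - p₁.2) := by linear_combination hcy - q₁.2 * hab
  have ex2 : c.1 - p₂.1 = v * (q₂.1 - p₂.1) := by linear_combination p₂.1 * huv - hdx
  have ex2' : q₂.1 - c.1 = u * (q₂.1 - p₂.1) := by linear_combination hdx - q₂.1 * huv
  have ey2 : c.2 - p₂.2 = v * (q₂.2 - p₂.2) := by linear_combination p₂.2 * huv - hdy
  have ey2' : q₂.2 - c.2 = u * (q₂.2 - p₂.2) := by linear_combination hdy - q₂.2 * huv
  have hpc1 : p₁.1 ≤ c.1 := by linarith [ex1, mul_nonneg hb (sub_nonneg.2 hx1.le)]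
  have hcq1 : c.1 ≤ q₁.1 := by linarith [ex1', mul_nonneg ha (sub_nonneg.2 hx1.le)]
  have hpc2 : p₂.1 ≤ c.1 := by linarith [ex2, mul_nonneg hv (sub_nonneg.2 hx2.le)]
  have hcq2 : c.1 ≤ q₂.1 := by linarith [ex2', mul_nonneg hu (sub_nonneg.2 hx2.le)]
  have hG1 : (q₁.1 - c.1) * p₁.2 + (c.1 - p₁.1) * q₁.2 = (q₁.1 - p₁.1) * c.2 := by
    rw [ex1', ex1, ← hcy]; ring
  have hG2 : (q₂.1 - c.1) * p₂.2 + (c.1 - p₂.1) * q₂.2 = (q₂.1 - p₂.1) * c.2 := by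
    rw [ex2', ex2, ← hdy]; ring
  have CPQ : q₂.1 ≤ p₁.1 → False := by
    intro h
    have e1 : c = p₁ := seg_left ha hb hab hc hx1 (by linarith)
    have e2 : c = q₂ := seg_right hu hv huv hd hx2 (by linarith)
    exact h14 (e1.symm.trans e2)
  have CQP : q₁.1 ≤ p₂.1 → False := by
    intro h
    have e1 : c = q₁ := seg_right ha hb hab hc hx1 (by linarith)
    have e2 : c = p₂ := seg_left hu hv huv hd hx2 (by linarith)
    exact h32 (e1.symm.trans e2)
  rcases le_total p₁.2 q₁.2 with A | A
  · rcases le_total p₂.2 q₂.2 with B | B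
    · -- block 1 : both edges ascending in y
      have hcy1l : p₁.2 ≤ c.2 := by linarith [ey1, mul_nonneg hb (sub_nonneg.2 A)]
      have hcy1u : c.2 ≤ q₁.2 := by linarith [ey1', mul_nonneg ha (sub_nonneg.2 A)]
      have hcy2l : p₂.2 ≤ c.2 := by linarith [ey2, mul_nonneg hv (sub_nonneg.2 B)]
      have hcy2u : c.2 ≤ q₂.2 := by linarith [ey2', mul_nonneg hu (sub_nonneg.2 B)]
      rcases le_total p₁.2 p₂.2 with C | C
      · rcases le_total q₂.2 q₁.2 with D | D
        · exact nested_main Q l z S' hl hz hno hS hp₁ hq₁ hp₂ hq₂ de1 de2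
            h12.symm h32.symm h14.symm h34.symm
            (abs_lt.2 ⟨by linarith, by linarith⟩) (abs_lt.2 ⟨by linarith, by linarith⟩)
            (abs_lt.2 ⟨by linarith, by linarith⟩) (abs_lt.2 ⟨by linarith, by linarith⟩)
            CPQ CQP
        · rcases eq_or_lt_of_le C with Ce | Clt
          · exact nested_main Q l z S' hl hz hno hS hp₂ hq₂ hp₁ hq₁ de2 de1
              h12 h14 h32 h34
              (abs_lt.2 ⟨by linarith, by linarith⟩) (abs_lt.2 ⟨by linarith, by linarith⟩)
              (abs_lt.2 ⟨by linarith, by linarith⟩) (abs_lt.2 ⟨by linarith, by linarith⟩)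
              CQP CPQ
          · rcases eq_or_lt_of_le D with De | Dlt
            · exact nested_main Q l z S' hl hz hno hS hp₁ hq₁ hp₂ hq₂ de1 de2
                h12.symm h32.symm h14.symm h34.symm
                (abs_lt.2 ⟨by linarith, by linarith⟩) (abs_lt.2 ⟨by linarith, by linarith⟩)
                (abs_lt.2 ⟨by linarith, by linarith⟩) (abs_lt.2 ⟨by linarith, by linarith⟩)
                CPQ CQP
            · -- hard crossed leaf, edge 1 below edge 2
              have o1 : |p₂.2 - p₁.2| < 1 := abs_lt.2 ⟨by linarith, by linarith⟩
              have o2 : |p₂.2 - q₁.2| < 1 := abs_lt.2 ⟨by linarith, by linarith⟩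
              have o3 : |q₁.2 - p₂.2| < 1 := abs_lt.2 ⟨by linarith, by linarith⟩
              have o4 : |q₁.2 - q₂.2| < 1 := abs_lt.2 ⟨by linarith, by linarith⟩
              rcases keyL Q l z S' hz hno hS hp₁ hq₁ hp₂ de1 h12.symm h32.symm o1 o2 with
                ⟨_, hXp⟩ | ⟨_, h⟩
              · rcases keyL Q l z S' hz hno hS hp₂ hq₂ hq₁ de2 h32 h34 o3 o4 with
                  ⟨_, h⟩ | ⟨_, hXq⟩
                · exact CQP h
                · exact cross_aux hx1 hx2 hXp hXq Clt Dlt A B hpc1 hcq2 hG1 hG2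
              · exact CQP h
      · rcases le_total q₁.2 q₂.2 with D | D
        · exact nested_main Q l z S' hl hz hno hS hp₂ hq₂ hp₁ hq₁ de2 de1
            h12 h14 h32 h34
            (abs_lt.2 ⟨by linarith, by linarith⟩) (abs_lt.2 ⟨by linarith, by linarith⟩)
            (abs_lt.2 ⟨by linarith, by linarith⟩) (abs_lt.2 ⟨by linarith, by linarith⟩)
            CQP CPQ
        · rcases eq_or_lt_of_le C with Ce | Clt
          · exact nested_main Q l z S' hl hz hno hS hp₁ hq₁ hp₂ hq₂ de1 de2
              h12.symm h32.symm h14.symm h34.symm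
              (abs_lt.2 ⟨by linarith, by linarith⟩) (abs_lt.2 ⟨by linarith, by linarith⟩)
              (abs_lt.2 ⟨by linarith, by linarith⟩) (abs_lt.2 ⟨by linarith, by linarith⟩)
              CPQ CQP
          · rcases eq_or_lt_of_le D with De | Dlt
            · exact nested_main Q l z S' hl hz hno hS hp₂ hq₂ hp₁ hq₁ de2 de1
                h12 h14 h32 h34
                (abs_lt.2 ⟨by linarith, by linarith⟩) (abs_lt.2 ⟨by linarith, by linarith⟩)
                (abs_lt.2 ⟨by linarith, by linarith⟩) (abs_lt.2 ⟨by linarith, by linarith⟩)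
                CQP CPQ
            · -- hard crossed leaf, edge 2 below edge 1
              have o1 : |p₁.2 - p₂.2| < 1 := abs_lt.2 ⟨by linarith, by linarith⟩
              have o2 : |p₁.2 - q₂.2| < 1 := abs_lt.2 ⟨by linarith, by linarith⟩
              have o3 : |q₂.2 - p₁.2| < 1 := abs_lt.2 ⟨by linarith, by linarith⟩
              have o4 : |q₂.2 - q₁.2| < 1 := abs_lt.2 ⟨by linarith, by linarith⟩
              rcases keyL Q l z S' hz hno hS hp₂ hq₂ hp₁ de2 h12 h14 o1 o2 with
                ⟨_, hXp⟩ | ⟨_, h⟩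
              · rcases keyL Q l z S' hz hno hS hp₁ hq₁ hq₂ de1 h14.symm h34.symm o3 o4 with
                  ⟨_, h⟩ | ⟨_, hXq⟩
                · exact CPQ h
                · exact cross_aux hx2 hx1 hXp hXq Clt Dlt B A hpc2 hcq1 hG2 hG1
              · exact CPQ h
    · -- block 2 : edge 1 ascending, edge 2 descending
      have hcy1l : p₁.2 ≤ c.2 := by linarith [ey1, mul_nonneg hb (sub_nonneg.2 A)]
      have hcy1u : c.2 ≤ q₁.2 := by linarith [ey1', mul_nonneg ha (sub_nonneg.2 A)]
      have hcy2l : q₂.2 ≤ c.2 := by linarith [ey2', mul_nonneg hu (sub_nonneg.2 B)]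
      have hcy2u : c.2 ≤ p₂.2 := by linarith [ey2, mul_nonneg hv (sub_nonneg.2 B)]
      rcases le_total p₁.2 q₂.2 with C | C
      · rcases le_total p₂.2 q₁.2 with D | D
        · exact nested_main Q l z S' hl hz hno hS hp₁ hq₁ hp₂ hq₂ de1 de2
            h12.symm h32.symm h14.symm h34.symm
            (abs_lt.2 ⟨by linarith, by linarith⟩) (abs_lt.2 ⟨by linarith, by linarith⟩)
            (abs_lt.2 ⟨by linarith, by linarith⟩) (abs_lt.2 ⟨by linarith, by linarith⟩)
            CPQ CQP
        · exact crossQQ Q l z S' hl hz hno hS hp₁ hq₁ hp₂ hq₂ de1 de2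
            h14.symm h34.symm h32 h34
            (abs_lt.2 ⟨by linarith, by linarith⟩) (abs_lt.2 ⟨by linarith, by linarith⟩)
            (abs_lt.2 ⟨by linarith, by linarith⟩) (abs_lt.2 ⟨by linarith, by linarith⟩)
            CPQ CQP
      · rcases le_total p₂.2 q₁.2 with D | D
        · exact crossPP Q l z S' hl hz hno hS hp₁ hq₁ hp₂ hq₂ de1 de2
            h12.symm h32.symm h12 h14
            (abs_lt.2 ⟨by linarith, by linarith⟩) (abs_lt.2 ⟨by linarith, by linarith⟩)
            (abs_lt.2 ⟨by linarith, by linarith⟩) (abs_lt.2 ⟨by linarith, by linarith⟩)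
            CPQ CQP
        · exact nested_main Q l z S' hl hz hno hS hp₂ hq₂ hp₁ hq₁ de2 de1
            h12 h14 h32 h34
            (abs_lt.2 ⟨by linarith, by linarith⟩) (abs_lt.2 ⟨by linarith, by linarith⟩)
            (abs_lt.2 ⟨by linarith, by linarith⟩) (abs_lt.2 ⟨by linarith, by linarith⟩)
            CQP CPQ
  · rcases le_total p₂.2 q₂.2 with B | B
    · -- block 3 : edge 1 descending, edge 2 ascending
      have hcy1l : q₁.2 ≤ c.2 := by linarith [ey1', mul_nonneg ha (sub_nonneg.2 A)]
      have hcy1u : c.2 ≤ p₁.2 := by linarith [ey1, mul_nonneg hb (sub_nonneg.2 A)]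
      have hcy2l : p₂.2 ≤ c.2 := by linarith [ey2, mul_nonneg hv (sub_nonneg.2 B)]
      have hcy2u : c.2 ≤ q₂.2 := by linarith [ey2', mul_nonneg hu (sub_nonneg.2 B)]
      rcases le_total q₁.2 p₂.2 with C | C
      · rcases le_total q₂.2 p₁.2 with D | D
        · exact nested_main Q l z S' hl hz hno hS hp₁ hq₁ hp₂ hq₂ de1 de2
            h12.symm h32.symm h14.symm h34.symm
            (abs_lt.2 ⟨by linarith, by linarith⟩) (abs_lt.2 ⟨by linarith, by linarith⟩)
            (abs_lt.2 ⟨by linarith, by linarith⟩) (abs_lt.2 ⟨by linarith, by linarith⟩)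
            CPQ CQP
        · exact crossPP Q l z S' hl hz hno hS hp₁ hq₁ hp₂ hq₂ de1 de2
            h12.symm h32.symm h12 h14
            (abs_lt.2 ⟨by linarith, by linarith⟩) (abs_lt.2 ⟨by linarith, by linarith⟩)
            (abs_lt.2 ⟨by linarith, by linarith⟩) (abs_lt.2 ⟨by linarith, by linarith⟩)
            CPQ CQP
      · rcases le_total q₂.2 p₁.2 with D | D
        · exact crossQQ Q l z S' hl hz hno hS hp₁ hq₁ hp₂ hq₂ de1 de2
            h14.symm h34.symm h32 h34
            (abs_lt.2 ⟨by linarith, by linarith⟩) (abs_lt.2 ⟨by linarith, by linarith⟩)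
            (abs_lt.2 ⟨by linarith, by linarith⟩) (abs_lt.2 ⟨by linarith, by linarith⟩)
            CPQ CQP
        · exact nested_main Q l z S' hl hz hno hS hp₂ hq₂ hp₁ hq₁ de2 de1
            h12 h14 h32 h34
            (abs_lt.2 ⟨by linarith, by linarith⟩) (abs_lt.2 ⟨by linarith, by linarith⟩)
            (abs_lt.2 ⟨by linarith, by linarith⟩) (abs_lt.2 ⟨by linarith, by linarith⟩)
            CQP CPQ
    · -- block 4 : both edges descending
      have hcy1l : q₁.2 ≤ c.2 := by linarith [ey1', mul_nonneg ha (sub_nonneg.2 A)]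
      have hcy1u : c.2 ≤ p₁.2 := by linarith [ey1, mul_nonneg hb (sub_nonneg.2 A)]
      have hcy2l : q₂.2 ≤ c.2 := by linarith [ey2', mul_nonneg hu (sub_nonneg.2 B)]
      have hcy2u : c.2 ≤ p₂.2 := by linarith [ey2, mul_nonneg hv (sub_nonneg.2 B)]
      rcases le_total q₁.2 q₂.2 with C | C
      · rcases le_total p₂.2 p₁.2 with D | D
        · exact nested_main Q l z S' hl hz hno hS hp₁ hq₁ hp₂ hq₂ de1 de2
            h12.symm h32.symm h14.symm h34.symm
            (abs_lt.2 ⟨by linarith, by linarith⟩) (abs_lt.2 ⟨by linarith, by linarith⟩)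
            (abs_lt.2 ⟨by linarith, by linarith⟩) (abs_lt.2 ⟨by linarith, by linarith⟩)
            CPQ CQP
        · rcases eq_or_lt_of_le C with Ce | Clt
          · exact nested_main Q l z S' hl hz hno hS hp₂ hq₂ hp₁ hq₁ de2 de1
              h12 h14 h32 h34
              (abs_lt.2 ⟨by linarith, by linarith⟩) (abs_lt.2 ⟨by linarith, by linarith⟩)
              (abs_lt.2 ⟨by linarith, by linarith⟩) (abs_lt.2 ⟨by linarith, by linarith⟩)
              CQP CPQ
          · rcases eq_or_lt_of_le D with De | Dlt
            · exact nested_main Q l z S' hl hz hno hS hp₁ hq₁ hp₂ hq₂ de1 de2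
                h12.symm h32.symm h14.symm h34.symm
                (abs_lt.2 ⟨by linarith, by linarith⟩) (abs_lt.2 ⟨by linarith, by linarith⟩)
                (abs_lt.2 ⟨by linarith, by linarith⟩) (abs_lt.2 ⟨by linarith, by linarith⟩)
                CPQ CQP
            · -- hard crossed leaf (descending), edge 1 below edge 2
              have o1 : |q₂.2 - p₁.2| < 1 := abs_lt.2 ⟨by linarith, by linarith⟩
              have o2 : |q₂.2 - q₁.2| < 1 := abs_lt.2 ⟨by linarith, by linarith⟩
              have o3 : |p₁.2 - p₂.2| < 1 := abs_lt.2 ⟨by linarith, by linarith⟩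
              have o4 : |p₁.2 - q₂.2| < 1 := abs_lt.2 ⟨by linarith, by linarith⟩
              rcases keyL Q l z S' hz hno hS hp₁ hq₁ hq₂ de1 h14.symm h34.symm o1 o2 with
                ⟨_, h⟩ | ⟨_, hXq⟩
              · exact CPQ h
              · rcases keyL Q l z S' hz hno hS hp₂ hq₂ hp₁ de2 h12 h14 o3 o4 with
                  ⟨_, hXp⟩ | ⟨_, h⟩
                · exact cross_aux (show -q₁.1 < -p₁.1 by linarith)
                    (show -q₂.1 < -p₂.1 by linarith)
                    (show -q₂.1 ≤ -q₁.1 by linarith)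
                    (show -p₂.1 ≤ -p₁.1 by linarith)
                    Clt Dlt A B
                    (show -q₁.1 ≤ -c.1 by linarith)
                    (show -c.1 ≤ -p₂.1 by linarith)
                    (show (-p₁.1 - -c.1) * q₁.2 + (-c.1 - -q₁.1) * p₁.2
                        = (-p₁.1 - -q₁.1) * c.2 by linear_combination hG1)
                    (show (-p₂.1 - -c.1) * q₂.2 + (-c.1 - -q₂.1) * p₂.2
                        = (-p₂.1 - -q₂.1) * c.2 by linear_combination hG2)
                · exact CPQ h
      · rcases le_total p₂.2 p₁.2 with D | D
        · rcases eq_or_lt_of_le C with Ce | Clt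
          · exact nested_main Q l z S' hl hz hno hS hp₁ hq₁ hp₂ hq₂ de1 de2
              h12.symm h32.symm h14.symm h34.symm
              (abs_lt.2 ⟨by linarith, by linarith⟩) (abs_lt.2 ⟨by linarith, by linarith⟩)
              (abs_lt.2 ⟨by linarith, by linarith⟩) (abs_lt.2 ⟨by linarith, by linarith⟩)
              CPQ CQP
          · rcases eq_or_lt_of_le D with De | Dlt
            · exact nested_main Q l z S' hl hz hno hS hp₂ hq₂ hp₁ hq₁ de2 de1
                h12 h14 h32 h34
                (abs_lt.2 ⟨by linarith, by linarith⟩) (abs_lt.2 ⟨by linarith, by linarith⟩)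
                (abs_lt.2 ⟨by linarith, by linarith⟩) (abs_lt.2 ⟨by linarith, by linarith⟩)
                CQP CPQ
            · -- hard crossed leaf (descending), edge 2 below edge 1
              have o1 : |q₁.2 - p₂.2| < 1 := abs_lt.2 ⟨by linarith, by linarith⟩
              have o2 : |q₁.2 - q₂.2| < 1 := abs_lt.2 ⟨by linarith, by linarith⟩
              have o3 : |p₂.2 - p₁.2| < 1 := abs_lt.2 ⟨by linarith, by linarith⟩
              have o4 : |p₂.2 - q₁.2| < 1 := abs_lt.2 ⟨by linarith, by linarith⟩
              rcases keyL Q l z S' hz hno hS hp₂ hq₂ hq₁ de2 h32 h34 o1 o2 with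
                ⟨_, h⟩ | ⟨_, hXq⟩
              · exact CQP h
              · rcases keyL Q l z S' hz hno hS hp₁ hq₁ hp₂ de1 h12.symm h32.symm o3 o4 with
                  ⟨_, hXp⟩ | ⟨_, h⟩
                · exact cross_aux (show -q₂.1 < -p₂.1 by linarith)
                    (show -q₁.1 < -p₁.1 by linarith)
                    (show -q₁.1 ≤ -q₂.1 by linarith)
                    (show -p₁.1 ≤ -p₂.1 by linarith)
                    Clt Dlt B A
                    (show -q₂.1 ≤ -c.1 by linarith)
                    (show -c.1 ≤ -p₁.1 by linarith)
                    (show (-p₂.1 - -c.1) * q₂.2 + (-c.1 - -q₂.1) * p₂.2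
                        = (-p₂.1 - -q₂.1) * c.2 by linear_combination hG2)
                    (show (-p₁.1 - -c.1) * q₁.2 + (-c.1 - -q₁.1) * p₁.2
                        = (-p₁.1 - -q₁.1) * c.2 by linear_combination hG1)
                · exact CQP h
        · exact nested_main Q l z S' hl hz hno hS hp₂ hq₂ hp₁ hq₁ de2 de1
            h12 h14 h32 h34
            (abs_lt.2 ⟨by linarith, by linarith⟩) (abs_lt.2 ⟨by linarith, by linarith⟩)
            (abs_lt.2 ⟨by linarith, by linarith⟩) (abs_lt.2 ⟨by linarith, by linarith⟩)
            CQP CPQ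
end

section
/- Shortest-lexicographic normalization correctness: Let G be a finite directed acyclic graph on vertex set Q' with nonnegative edge lengths, plus an extra source vertex O with, for each x ∈ S' and each p ∈ Q', an edge from O to p of length x, where S' contains p_x - l(p) for every point p. For each p ∈ Q', define z'(p) to be the maximum length of a directed path from O to p that does not exceed z(p). Then z'(p) is well-defined, satisfies p_x - l(p) ≤ z'(p) ≤ z(p), and if (p,q) is an edge of G with length l(p) and z(p) + l(p) ≤ z(q), then z'(q) ≥ z'(p) + l(p). -/
/-!
Since every edge strictly increases the first coordinate and all vertices lie in the finite
set `Q'`, only finitely many lengths of paths from `O` reach a given vertex; the path given by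
the direct edge `O → p` of length `p_x - l(p) ≤ z(p)` makes the truncated set nonempty, so it has
a maximum `z'(p)`. Extending a `p`-path of length `z'(p)` by the edge `(p, q)` gives a `q`-path of
length `z'(p) + l(p) ≤ z(p) + l(p) ≤ z(q)`, hence `z'(p) + l(p) ≤ z'(q)`.
-/

/-- `ReachLen E l S' p c` holds iff `c` is the length of a directed path from the
extra source `O` to `p` in the augmented graph: paths start with an edge `O → q` of
length `x` for some `x ∈ S'`, and each edge `(p,q)` of `E` has length `l p`. -/
inductive ReachLen (E : ℝ × ℝ → ℝ × ℝ → Prop) (l : ℝ × ℝ → ℝ) (S' : Finset ℝ) :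
    ℝ × ℝ → ℝ → Prop
  | base (p : ℝ × ℝ) (x : ℝ) (hx : x ∈ S') : ReachLen E l S' p x
  | step (p q : ℝ × ℝ) (c : ℝ) (hc : ReachLen E l S' p c) (h : E p q) :
      ReachLen E l S' q (c + l p)

open Finset

theorem card_filter_lt_lt_of_mem_of_lt {α β : Type*} [LinearOrder β] {s : Finset α} {f : α → β}
    {a b : α} (ha : a ∈ s) (hab : f a < f b) :
    #{x ∈ s | f x < f a} < #{x ∈ s | f x < f b} :=
  card_lt_card <| (ssubset_iff_of_subset fun _ hx => by
    simp only [mem_filter] at hx ⊢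
    exact ⟨hx.1, hx.2.trans hab⟩).2 ⟨a, by simp [ha, hab]⟩

namespace ReachLen

variable {E : ℝ × ℝ → ℝ × ℝ → Prop} {l : ℝ × ℝ → ℝ} {S' : Finset ℝ}

theorem setOf_subset_union_biUnion {Q' : Finset (ℝ × ℝ)}
    (hE : ∀ p q, E p q → p ∈ Q' ∧ p.1 < q.1) (p : ℝ × ℝ) :
    {c | ReachLen E l S' p c} ⊆
      ↑S' ∪ ⋃ q ∈ {r ∈ Q' | r.1 < p.1}, (· + l q) '' {c | ReachLen E l S' q c} := by
  rintro _ (⟨_, x, hx⟩ | ⟨q, _, c, hc, hqp⟩)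
  · exact Or.inl hx
  · exact Or.inr <| Set.mem_biUnion (by simpa using hE q p hqp) ⟨c, hc, rfl⟩

theorem finite_setOf {Q' : Finset (ℝ × ℝ)} (hE : ∀ p q, E p q → p ∈ Q' ∧ p.1 < q.1)
    (p : ℝ × ℝ) : {c | ReachLen E l S' p c}.Finite := by
  induction p using (measure fun p : ℝ × ℝ => #{r ∈ Q' | r.1 < p.1}).wf.induction with
  | h p ih =>
    refine (S'.finite_toSet.union <| Set.Finite.biUnion (Finset.finite_toSet _) fun q hq =>
      (ih q ?_).image _).subset (setOf_subset_union_biUnion hE p)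
    rw [coe_filter] at hq
    exact card_filter_lt_lt_of_mem_of_lt hq.1 hq.2

end ReachLen

theorem normalization_correct_general (Q' : Finset (ℝ × ℝ)) (l z : ℝ × ℝ → ℝ)
    (hz : ∀ p ∈ Q', p.1 - l p ≤ z p ∧ z p ≤ p.1)
    (E : ℝ × ℝ → ℝ × ℝ → Prop)
    (hE : ∀ p q, E p q → p ∈ Q' ∧ q ∈ Q' ∧ p.1 < q.1)
    (S' : Finset ℝ) (hS' : ∀ p ∈ Q', p.1 - l p ∈ S') :
    (∀ p ∈ Q', ∃ m : ℝ, IsGreatest {c | ReachLen E l S' p c ∧ c ≤ z p} m) ∧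
    (∀ z' : ℝ × ℝ → ℝ,
      (∀ p ∈ Q', IsGreatest {c | ReachLen E l S' p c ∧ c ≤ z p} (z' p)) →
      (∀ p ∈ Q', p.1 - l p ≤ z' p ∧ z' p ≤ z p) ∧
      (∀ p q : ℝ × ℝ, E p q → z p + l p ≤ z q → z' p + l p ≤ z' q)) := by
  have hdirect : ∀ p ∈ Q', p.1 - l p ∈ {c | ReachLen E l S' p c ∧ c ≤ z p} := fun p hp =>
    ⟨.base p _ (hS' p hp), (hz p hp).1⟩
  refine ⟨fun p hp => ?_, fun z' hz' => ⟨fun p hp => ?_, fun p q hpq hzpq => ?_⟩⟩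
  · have hfin : {c | ReachLen E l S' p c ∧ c ≤ z p}.Finite :=
      (ReachLen.finite_setOf (fun p q h => ⟨(hE p q h).1, (hE p q h).2.2⟩) p).subset
        fun _ hc => hc.1
    obtain ⟨m, hm, hmax⟩ := Set.exists_max_image _ id hfin ⟨_, hdirect p hp⟩
    exact ⟨m, hm, hmax⟩
  · exact ⟨(hz' p hp).2 (hdirect p hp), (hz' p hp).1.2⟩
  · obtain ⟨hp, hq, -⟩ := hE p q hpq
    obtain ⟨⟨hreach, hle⟩, -⟩ := hz' p hp
    exact (hz' q hq).2 ⟨.step p q _ hreach hpq, by linarith⟩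

/-- Normalization correctness: defining `z'(p)` as the largest length of a path from
`O` to `p` not exceeding `z(p)`, the value `z'(p)` is well-defined, satisfies
`p_x - l(p) ≤ z'(p) ≤ z(p)`, and if `(p,q)` is an edge with `z(p) + l(p) ≤ z(q)`,
then `z'(q) ≥ z'(p) + l(p)`. -/
theorem normalization_correct (Q' : Finset (ℝ × ℝ)) (l z : ℝ × ℝ → ℝ)
    (hl : ∀ p ∈ Q', 0 < l p)
    (hz : ∀ p ∈ Q', p.1 - l p ≤ z p ∧ z p ≤ p.1)
    (E : ℝ × ℝ → ℝ × ℝ → Prop)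
    (hE : ∀ p q, E p q → p ∈ Q' ∧ q ∈ Q' ∧ p.1 < q.1)
    (S' : Finset ℝ) (hS' : ∀ p ∈ Q', p.1 - l p ∈ S') :
    (∀ p ∈ Q', ∃ m : ℝ, IsGreatest {c | ReachLen E l S' p c ∧ c ≤ z p} m) ∧
    (∀ z' : ℝ × ℝ → ℝ,
      (∀ p ∈ Q', IsGreatest {c | ReachLen E l S' p c ∧ c ≤ z p} (z' p)) →
      (∀ p ∈ Q', p.1 - l p ≤ z' p ∧ z' p ≤ z p) ∧
      (∀ p q : ℝ × ℝ, E p q → z p + l p ≤ z q → z' p + l p ≤ z' q)) :=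
  normalization_correct_general Q' l z hz E hE S' hS'
end
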